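/- Let C > 0 and let μ be a Borel probability measure on Ω × Θ_C whose pushforward under each τ̃_x, x ∈ ℝ^d, equals μ. Then: (i) for μ-almost every (ω, θ), the limit ρ_{(ω,θ)}(q) := lim_{t→+∞} θ(tq)/t exists for every q ∈ ℚ^d; (ii) for every x ∈ ℝ^d and q ∈ ℚ^d, for μ-almost every (ω, θ), lim_{t→+∞} (θ(x + tq) − θ(x))/t exists and equals lim_{t→+∞} θ(tq)/t, i.e. ρ is invariant under τ̃_x. -/

import Mathlib

open MeasureTheory Filter Topology
open scoped ENNReal

noncomputable section

/-- Euclidean space `ℝ^d`. -/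
abbrev EucSp (d : ℕ) := EuclideanSpace ℝ (Fin d)

/-- Vectors of `ℝ^d` with rational coordinates. -/
def IsRatVec {d : ℕ} (q : EucSp d) : Prop := ∀ i, ∃ a : ℚ, q i = (a : ℝ)

/-- `Θ_C`: functions `θ : ℝ^d → ℝ` with `θ 0 = 0` that are Lipschitz with constant `C`. -/
def Theta (d : ℕ) (C : ℝ) : Type :=
  {θ : EucSp d → ℝ // θ 0 = 0 ∧ ∀ x y, |θ x - θ y| ≤ C * ‖x - y‖}

/-- The distance `d(θ₁, θ₂) = sup_x |θ₁ x - θ₂ x| / (1 + |x|²)`. -/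
noncomputable def thetaDist {d : ℕ} {C : ℝ} (θ₁ θ₂ : Theta d C) : ℝ :=
  ⨆ x : EucSp d, |θ₁.1 x - θ₂.1 x| / (1 + ‖x‖ ^ 2)

theorem thetaDist_term_le {d : ℕ} {C : ℝ} (θ₁ θ₂ : Theta d C) (x : EucSp d) :
    |θ₁.1 x - θ₂.1 x| / (1 + ‖x‖ ^ 2) ≤ |C| := by
  have hx : (0:ℝ) < 1 + ‖x‖ ^ 2 := by positivity
  have a := θ₁.2.2 x 0
  have b := θ₂.2.2 x 0
  rw [θ₁.2.1] at a
  rw [θ₂.2.1] at b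
  simp only [sub_zero] at a b
  have h1 : |θ₁.1 x - θ₂.1 x| ≤ |θ₁.1 x| + |θ₂.1 x| := abs_sub _ _
  rw [div_le_iff₀ hx]
  nlinarith [abs_nonneg C, norm_nonneg x, sq_nonneg (‖x‖ - 1), le_abs_self C,
    mul_nonneg (abs_nonneg C) (sq_nonneg (‖x‖ - 1)),
    mul_nonneg (sub_nonneg.mpr (le_abs_self C)) (norm_nonneg x)]

theorem thetaDist_bddAbove {d : ℕ} {C : ℝ} (θ₁ θ₂ : Theta d C) :
    BddAbove (Set.range fun x : EucSp d => |θ₁.1 x - θ₂.1 x| / (1 + ‖x‖ ^ 2)) := by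
  refine ⟨|C|, ?_⟩
  rintro y ⟨x, rfl⟩
  exact thetaDist_term_le θ₁ θ₂ x

/-- `(Θ_C, thetaDist)` is a metric space. -/
noncomputable instance {d : ℕ} {C : ℝ} : MetricSpace (Theta d C) where
  dist := thetaDist
  dist_self θ := by simp [thetaDist]
  dist_comm θ₁ θ₂ := by
    unfold thetaDist
    exact iSup_congr fun x => by rw [abs_sub_comm]
  dist_triangle θ₁ θ₂ θ₃ := by
    refine ciSup_le fun x => ?_
    have h : |θ₁.1 x - θ₃.1 x| / (1 + ‖x‖ ^ 2) ≤
        |θ₁.1 x - θ₂.1 x| / (1 + ‖x‖ ^ 2) + |θ₂.1 x - θ₃.1 x| / (1 + ‖x‖ ^ 2) := by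
      rw [← add_div]
      gcongr
      exact abs_sub_le _ _ _
    refine h.trans (add_le_add ?_ ?_)
    · exact le_ciSup (thetaDist_bddAbove θ₁ θ₂) x
    · exact le_ciSup (thetaDist_bddAbove θ₂ θ₃) x
  eq_of_dist_eq_zero {θ₁ θ₂} h := by
    have h' : thetaDist θ₁ θ₂ = 0 := h
    apply Subtype.ext
    funext x
    have hx : (0:ℝ) < 1 + ‖x‖ ^ 2 := by positivity
    have hle : |θ₁.1 x - θ₂.1 x| / (1 + ‖x‖ ^ 2) ≤ thetaDist θ₁ θ₂ :=
      le_ciSup (thetaDist_bddAbove θ₁ θ₂) x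
    rw [h'] at hle
    have h0 : 0 ≤ |θ₁.1 x - θ₂.1 x| / (1 + ‖x‖ ^ 2) := by positivity
    have heq : |θ₁.1 x - θ₂.1 x| / (1 + ‖x‖ ^ 2) = 0 := le_antisymm hle h0
    rcases div_eq_zero_iff.mp heq with hnum | hden
    · exact sub_eq_zero.mp (abs_eq_zero.mp hnum)
    · exact absurd hden hx.ne'

instance {d : ℕ} {C : ℝ} : MeasurableSpace (Theta d C) := borel _
instance {d : ℕ} {C : ℝ} : BorelSpace (Theta d C) := ⟨rfl⟩

/-- The shift `θ ↦ θ(· + x) − θ(x)` on `Θ_C`. -/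
def Theta.shift {d : ℕ} {C : ℝ} (x : EucSp d) (θ : Theta d C) : Theta d C :=
  ⟨fun y => θ.1 (y + x) - θ.1 x, by simp [θ.2.1], fun y z => by
    have h := θ.2.2 (y + x) (z + x)
    simpa using h⟩

/-! Fix a direction `q`. The map `T (ω, θ) = (τ_q ω, θ(· + q) - θ(q))` preserves `μ`, and the
cocycle identity `θ((n + 1) q) = θ(q) + (θ(· + q) - θ(q))(n q)` exhibits `θ(n q)` as the `n`-th
Birkhoff sum of the bounded observable `(ω, θ) ↦ θ(q)`. Birkhoff's pointwise ergodic theorem for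
bounded observables, which follows from Garsia's maximal inequality applied on the invariant sets
`{liminf < a} ∩ {b < limsup}` (a < b rational), gives convergence of `θ(n q) / n`; the Lipschitz
bound passes this to real `t → ∞`, and countability of `ℚ^d` to all rational directions at once.
Part (ii) holds pointwise, because `|θ(x + t q) - θ(x) - θ(t q)| ≤ 2 C |x|` is bounded in `t`. -/

section MaximalErgodic

variable {α : Type*} {T : α → α} {f : α → ℝ}

def birkhoffMax (T : α → α) (f : α → ℝ) (N : ℕ) (x : α) : ℝ :=
  (Finset.range (N + 1)).sup' Finset.nonempty_range_add_one fun k => birkhoffSum T f k x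

lemma birkhoffSum_le_birkhoffMax {k N : ℕ} (h : k ≤ N) (x : α) :
    birkhoffSum T f k x ≤ birkhoffMax T f N x :=
  Finset.le_sup' (fun k => birkhoffSum T f k x) (Finset.mem_range_succ_iff.2 h)

lemma birkhoffMax_nonneg (N : ℕ) (x : α) : 0 ≤ birkhoffMax T f N x := by
  simpa using birkhoffSum_le_birkhoffMax (T := T) (f := f) N.zero_le x

lemma monotone_birkhoffMax (x : α) : Monotone fun N => birkhoffMax T f N x :=
  fun _ _ h => Finset.sup'_mono _ (Finset.range_subset_range.2 (by omega)) _

lemma birkhoffMax_le_add_birkhoffMax_apply {N : ℕ} {x : α} (hpos : 0 < birkhoffMax T f N x) :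
    birkhoffMax T f N x ≤ f x + birkhoffMax T f N (T x) := by
  obtain ⟨k, hk, hmax⟩ := Finset.exists_mem_eq_sup' Finset.nonempty_range_add_one
    fun k => birkhoffSum T f k x
  rw [birkhoffMax, hmax] at hpos ⊢
  cases k with
  | zero => simp at hpos
  | succ j =>
    rw [birkhoffSum_succ']
    gcongr
    exact birkhoffSum_le_birkhoffMax (by simp at hk; omega) _

lemma birkhoffMax_eq_sup' (N : ℕ) :
    birkhoffMax T f N = (Finset.range (N + 1)).sup' Finset.nonempty_range_add_one
      fun k => birkhoffSum T f k := by
  ext x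
  simp [birkhoffMax, Finset.sup'_apply]

variable [MeasurableSpace α] {μ : Measure α}

lemma measurable_birkhoffSum (hT : Measurable T) (hf : Measurable f) (n : ℕ) :
    Measurable (birkhoffSum T f n) :=
  Finset.measurable_sum _ fun k _ => hf.comp (hT.iterate k)

lemma measurable_birkhoffMax (hT : Measurable T) (hf : Measurable f) (N : ℕ) :
    Measurable (birkhoffMax T f N) :=
  Finset.measurable_range_sup'' fun k _ => measurable_birkhoffSum hT hf k

lemma MeasureTheory.MeasurePreserving.integrable_birkhoffSum (hT : MeasurePreserving T μ μ)
    (hf : Integrable f μ) (n : ℕ) : Integrable (birkhoffSum T f n) μ :=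
  integrable_finsetSum _ fun k _ => (hT.iterate k).integrable_comp_of_integrable hf

lemma MeasureTheory.MeasurePreserving.integrable_birkhoffMax (hT : MeasurePreserving T μ μ)
    (hf : Integrable f μ) (N : ℕ) : Integrable (birkhoffMax T f N) μ := by
  rw [birkhoffMax_eq_sup']
  exact Finset.sup'_induction (p := (Integrable · μ)) _ _ (fun _ h₁ _ h₂ => h₁.sup h₂)
    fun k _ => hT.integrable_birkhoffSum hf k

theorem MeasureTheory.MeasurePreserving.setIntegral_birkhoffMax_pos_nonneg
    (hT : MeasurePreserving T μ μ) (hfm : Measurable f) (hf : Integrable f μ) (N : ℕ) :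
    0 ≤ ∫ x in {x | 0 < birkhoffMax T f N x}, f x ∂μ := by
  set m := birkhoffMax T f N
  have hm : Integrable m μ := hT.integrable_birkhoffMax hf N
  have hmT : Integrable (m ∘ T) μ := hT.integrable_comp_of_integrable hm
  have hE : MeasurableSet {x | 0 < m x} :=
    measurableSet_lt measurable_const (measurable_birkhoffMax hT.measurable hfm N)
  have hTint : ∫ x, m (T x) ∂μ = ∫ x, m x ∂μ := by
    rw [← integral_map hT.measurable.aemeasurable
      (by rw [hT.map_eq]; exact hm.aestronglyMeasurable), hT.map_eq]
  calc (0 : ℝ) = ∫ x, m x ∂μ - ∫ x, m (T x) ∂μ := by rw [hTint, sub_self]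
    _ ≤ ∫ x in {x | 0 < m x}, m x ∂μ - ∫ x in {x | 0 < m x}, m (T x) ∂μ := by
        rw [setIntegral_eq_integral_of_forall_compl_eq_zero (s := {x | 0 < m x}) fun x hx =>
          le_antisymm (not_lt.1 hx) (birkhoffMax_nonneg N x)]
        exact sub_le_sub_left (setIntegral_le_integral hmT
          (ae_of_all _ fun x => birkhoffMax_nonneg N (T x))) _
    _ = ∫ x in {x | 0 < m x}, (m x - m (T x)) ∂μ :=
        (integral_sub hm.integrableOn hmT.integrableOn).symm
    _ ≤ ∫ x in {x | 0 < m x}, f x ∂μ :=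
        setIntegral_mono_on (hm.integrableOn.sub hmT.integrableOn) hf.integrableOn hE
          fun x hx => by linarith [birkhoffMax_le_add_birkhoffMax_apply (T := T) hx]

theorem MeasureTheory.MeasurePreserving.mul_measureReal_le_setIntegral [IsFiniteMeasure μ]
    (hT : MeasurePreserving T μ μ) (hfm : Measurable f) (hf : Integrable f μ) {E : Set α}
    (hE : MeasurableSet E) (hTE : T ⁻¹' E = E) {b : ℝ}
    (hgt : ∀ x ∈ E, ∃ n : ℕ, n * b < birkhoffSum T f n x) :
    b * μ.real E ≤ ∫ x in E, f x ∂μ := by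
  set g : α → ℝ := fun x => f x - b
  have hgm : Measurable g := hfm.sub_const b
  have hg : Integrable g (μ.restrict E) := (hf.sub (integrable_const b)).restrict
  have hTE' : MeasurePreserving T (μ.restrict E) (μ.restrict E) := by
    simpa only [hTE] using hT.restrict_preimage hE
  have hU : ∀ᵐ x ∂μ.restrict E, x ∈ ⋃ N, {x | 0 < birkhoffMax T g N x} := by
    filter_upwards [ae_restrict_mem hE] with x hx
    obtain ⟨n, hn⟩ := hgt x hx
    have hSg : birkhoffSum T g n x = birkhoffSum T f n x - n * b := by
      simp [g, birkhoffSum, Finset.sum_sub_distrib]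
    exact Set.mem_iUnion.2
      ⟨n, (hSg ▸ sub_pos.2 hn).trans_le (birkhoffSum_le_birkhoffMax le_rfl x)⟩
  -- Garsia's inequality for `f - b` under the invariant measure `μ.restrict E`, as the sets
  -- `{0 < birkhoffMax T g N}` increase to (almost all of) `E`.
  have hlim := tendsto_setIntegral_of_monotone (s := fun N => {x | 0 < birkhoffMax T g N x})
    (fun N => measurableSet_lt measurable_const (measurable_birkhoffMax hT.measurable hgm N))
    (fun _ _ h x hx => lt_of_lt_of_le hx (monotone_birkhoffMax x h)) hg.integrableOn
  rw [Measure.restrict_eq_self_of_ae_mem hU] at hlim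
  have h0 : 0 ≤ ∫ x in E, g x ∂μ :=
    ge_of_tendsto' hlim fun N => hTE'.setIntegral_birkhoffMax_pos_nonneg hgm hg N
  rw [integral_sub hf.integrableOn (integrable_const b), setIntegral_const, smul_eq_mul] at h0
  linarith

theorem MeasureTheory.MeasurePreserving.measure_eq_zero_of_birkhoffSum_gt_of_lt
    [IsFiniteMeasure μ] (hT : MeasurePreserving T μ μ) (hfm : Measurable f) (hf : Integrable f μ)
    {E : Set α} (hE : MeasurableSet E) (hTE : T ⁻¹' E = E) {a b : ℝ} (hab : a < b)
    (hgt : ∀ x ∈ E, ∃ n : ℕ, n * b < birkhoffSum T f n x)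
    (hlt : ∀ x ∈ E, ∃ n : ℕ, birkhoffSum T f n x < n * a) :
    μ E = 0 := by
  have hb := hT.mul_measureReal_le_setIntegral hfm hf hE hTE hgt
  have ha := hT.mul_measureReal_le_setIntegral hfm.neg hf.neg hE hTE (b := -a) fun x hx => by
    obtain ⟨n, hn⟩ := hlt x hx
    exact ⟨n, by rw [birkhoffSum_neg]; linarith⟩
  simp only [Pi.neg_apply, integral_neg] at ha
  rw [← measureReal_eq_zero_iff]
  nlinarith [measureReal_nonneg (μ := μ) (s := E)]

end MaximalErgodic

section LimsupLiminf

variable {ι : Type*} {l : Filter ι} [l.NeBot] {u v : ι → ℝ}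

lemma limsup_add_of_tendsto_zero (hu₁ : IsBoundedUnder (· ≤ ·) l u)
    (hu₂ : IsBoundedUnder (· ≥ ·) l u) (hv : Tendsto v l (𝓝 0)) :
    limsup (u + v) l = limsup u l := by
  apply le_antisymm
  · calc limsup (u + v) l ≤ limsup u l + limsup v l :=
          limsup_add_le hu₂ hu₁ hv.isBoundedUnder_ge.isCoboundedUnder_le hv.isBoundedUnder_le
      _ = limsup u l := by rw [hv.limsup_eq, add_zero]
  · calc limsup u l = limsup u l + liminf v l := by rw [hv.liminf_eq, add_zero]
      _ ≤ limsup (u + v) l :=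
          le_limsup_add hu₁ hu₂.isCoboundedUnder_le hv.isBoundedUnder_le hv.isBoundedUnder_ge

lemma liminf_add_of_tendsto_zero (hu₁ : IsBoundedUnder (· ≤ ·) l u)
    (hu₂ : IsBoundedUnder (· ≥ ·) l u) (hv : Tendsto v l (𝓝 0)) :
    liminf (u + v) l = liminf u l := by
  apply le_antisymm
  · calc liminf (u + v) l = liminf (v + u) l := by rw [add_comm]
      _ ≤ limsup v l + liminf u l :=
          liminf_add_le hv.isBoundedUnder_ge hv.isBoundedUnder_le hu₂ hu₁.isCoboundedUnder_ge
      _ = liminf u l := by rw [hv.limsup_eq, zero_add]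
  · calc liminf u l = liminf u l + liminf v l := by rw [hv.liminf_eq, add_zero]
      _ ≤ liminf (u + v) l :=
          le_liminf_add hu₂ hu₁ hv.isBoundedUnder_ge hv.isBoundedUnder_le.isCoboundedUnder_ge

lemma exists_tendsto_of_forall_rat_not_liminf_lt_lt_limsup (hu₁ : IsBoundedUnder (· ≤ ·) l u)
    (hu₂ : IsBoundedUnder (· ≥ ·) l u)
    (h : ∀ a b : ℚ, (a : ℝ) < b → ¬(liminf u l < a ∧ (b : ℝ) < limsup u l)) :
    ∃ L, Tendsto u l (𝓝 L) := by
  refine ⟨limsup u l, tendsto_of_liminf_eq_limsup ?_ rfl hu₁ hu₂⟩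
  refine le_antisymm (liminf_le_limsup hu₁ hu₂) (not_lt.1 fun hlt => ?_)
  obtain ⟨a, ha, hab⟩ := exists_rat_btwn hlt
  obtain ⟨b, hab', hb⟩ := exists_rat_btwn hab
  exact h a b hab' ⟨ha, hb⟩

end LimsupLiminf

section BirkhoffAverage

variable {α : Type*} {T : α → α} {f : α → ℝ} {M : ℝ}

lemma abs_birkhoffAverage_le (hM : ∀ x, |f x| ≤ M) (n : ℕ) (x : α) :
    |birkhoffAverage ℝ T f n x| ≤ M := by
  rcases n.eq_zero_or_pos with rfl | hn
  · simpa using (abs_nonneg _).trans (hM x)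
  have hS : |birkhoffSum T f n x| ≤ n * M :=
    (Finset.abs_sum_le_sum_abs _ _).trans <| by
      simpa using Finset.sum_le_sum fun k (_ : k ∈ Finset.range n) => hM (T^[k] x)
  rwa [birkhoffAverage, smul_eq_mul, abs_mul, abs_inv, Nat.abs_cast,
    inv_mul_le_iff₀ (by positivity)]

lemma isBoundedUnder_le_birkhoffAverage (hM : ∀ x, |f x| ≤ M) (x : α) :
    IsBoundedUnder (· ≤ ·) atTop fun n => birkhoffAverage ℝ T f n x :=
  isBoundedUnder_of ⟨M, fun n => (abs_le.1 (abs_birkhoffAverage_le hM n x)).2⟩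

lemma isBoundedUnder_ge_birkhoffAverage (hM : ∀ x, |f x| ≤ M) (x : α) :
    IsBoundedUnder (· ≥ ·) atTop fun n => birkhoffAverage ℝ T f n x :=
  isBoundedUnder_of ⟨-M, fun n => (abs_le.1 (abs_birkhoffAverage_le hM n x)).1⟩

lemma tendsto_birkhoffAverage_apply_sub_of_abs_le (hM : ∀ x, |f x| ≤ M) (x : α) :
    Tendsto (fun n => birkhoffAverage ℝ T f n (T x) - birkhoffAverage ℝ T f n x) atTop (𝓝 0) :=
  tendsto_birkhoffAverage_apply_sub_birkhoffAverage' ℝ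
    (isBounded_iff_forall_norm_le.2 ⟨M, by rintro _ ⟨y, rfl⟩; exact hM y⟩) T x

lemma limsup_birkhoffAverage_apply (hM : ∀ x, |f x| ≤ M) (x : α) :
    limsup (fun n => birkhoffAverage ℝ T f n (T x)) atTop =
      limsup (fun n => birkhoffAverage ℝ T f n x) atTop := by
  rw [← limsup_add_of_tendsto_zero (isBoundedUnder_le_birkhoffAverage hM x)
    (isBoundedUnder_ge_birkhoffAverage hM x)
    (tendsto_birkhoffAverage_apply_sub_of_abs_le (T := T) hM x)]
  congr 1
  ext n
  simp only [Pi.add_apply, add_sub_cancel]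

lemma liminf_birkhoffAverage_apply (hM : ∀ x, |f x| ≤ M) (x : α) :
    liminf (fun n => birkhoffAverage ℝ T f n (T x)) atTop =
      liminf (fun n => birkhoffAverage ℝ T f n x) atTop := by
  rw [← liminf_add_of_tendsto_zero (isBoundedUnder_le_birkhoffAverage hM x)
    (isBoundedUnder_ge_birkhoffAverage hM x)
    (tendsto_birkhoffAverage_apply_sub_of_abs_le (T := T) hM x)]
  congr 1
  ext n
  simp only [Pi.add_apply, add_sub_cancel]

lemma exists_mul_lt_birkhoffSum {b : ℝ} {x : α}
    (h : ∃ᶠ n in atTop, b < birkhoffAverage ℝ T f n x) :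
    ∃ n : ℕ, n * b < birkhoffSum T f n x := by
  obtain ⟨n, hb, hn⟩ := (h.and_eventually (eventually_gt_atTop 0)).exists
  refine ⟨n, ?_⟩
  rwa [birkhoffAverage, smul_eq_mul, ← div_eq_inv_mul, lt_div_iff₀ (by positivity),
    mul_comm] at hb

lemma exists_birkhoffSum_lt_mul {a : ℝ} {x : α}
    (h : ∃ᶠ n in atTop, birkhoffAverage ℝ T f n x < a) :
    ∃ n : ℕ, birkhoffSum T f n x < n * a := by
  obtain ⟨n, hn⟩ := exists_mul_lt_birkhoffSum (f := -f) (b := -a) <| h.mono fun n hn => by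
    simpa [birkhoffAverage_neg] using hn
  exact ⟨n, by rw [birkhoffSum_neg] at hn; linarith⟩

variable [MeasurableSpace α] {μ : Measure α}

theorem MeasureTheory.MeasurePreserving.ae_exists_tendsto_birkhoffAverage [IsFiniteMeasure μ]
    (hT : MeasurePreserving T μ μ) (hf : Measurable f) (hM : ∀ x, |f x| ≤ M) :
    ∀ᵐ x ∂μ, ∃ L, Tendsto (fun n => birkhoffAverage ℝ T f n x) atTop (𝓝 L) := by
  set A : ℕ → α → ℝ := fun n x => birkhoffAverage ℝ T f n x
  have hAm (n : ℕ) : Measurable (A n) :=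
    (measurable_birkhoffSum hT.measurable hf n).const_smul (n : ℝ)⁻¹
  have hfi : Integrable f μ := .of_bound hf.aestronglyMeasurable M (ae_of_all _ hM)
  have hnull (a b : ℚ) : ∀ᵐ x ∂μ, (a : ℝ) < b →
      ¬(liminf (A · x) atTop < a ∧ (b : ℝ) < limsup (A · x) atTop) := by
    by_cases hab : (a : ℝ) < b
    · refine measure_eq_zero_iff_ae_notMem.1 ?_ |>.mono fun x hx _ => hx
      refine hT.measure_eq_zero_of_birkhoffSum_gt_of_lt hf hfi
        (E := {x | liminf (A · x) atTop < a ∧ (b : ℝ) < limsup (A · x) atTop}) ?_ ?_ hab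
        (fun x hx => exists_mul_lt_birkhoffSum <| frequently_lt_of_lt_limsup
          (isBoundedUnder_ge_birkhoffAverage hM x).isCoboundedUnder_le hx.2)
        (fun x hx => exists_birkhoffSum_lt_mul <| frequently_lt_of_liminf_lt
          (isBoundedUnder_le_birkhoffAverage hM x).isCoboundedUnder_ge hx.1)
      · exact (measurableSet_lt (Measurable.liminf hAm) measurable_const).inter
          (measurableSet_lt measurable_const (Measurable.limsup hAm))
      · ext x
        simp only [A, Set.mem_preimage, Set.mem_ofPred_eq, limsup_birkhoffAverage_apply hM,
          liminf_birkhoffAverage_apply hM]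
    · exact ae_of_all _ fun _ h => absurd h hab
  filter_upwards [ae_all_iff.2 fun a => ae_all_iff.2 (hnull a)] with x hx
  exact exists_tendsto_of_forall_rat_not_liminf_lt_lt_limsup
    (isBoundedUnder_le_birkhoffAverage hM x) (isBoundedUnder_ge_birkhoffAverage hM x) hx

end BirkhoffAverage

lemma tendsto_div_of_eventually_abs_sub_le {u v : ℝ → ℝ} {B L : ℝ}
    (h : ∀ᶠ t in atTop, |u t - v t| ≤ B) (hv : Tendsto (fun t => v t / t) atTop (𝓝 L)) :
    Tendsto (fun t => u t / t) atTop (𝓝 L) := by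
  have h0 : Tendsto (fun t => t⁻¹ * (u t - v t)) atTop (𝓝 0) :=
    tendsto_inv_atTop_zero.zero_mul_isBoundedUnder_le ⟨B, h⟩
  convert hv.add h0 using 1
  · ext t
    ring
  · rw [add_zero]

lemma LipschitzWith.tendsto_div_of_tendsto_natCast {φ : ℝ → ℝ} {K : NNReal} {L : ℝ}
    (hφ : LipschitzWith K φ) (h : Tendsto (fun n : ℕ => φ n / n) atTop (𝓝 L)) :
    Tendsto (fun t => φ t / t) atTop (𝓝 L) := by
  have hfloor : Tendsto (fun t : ℝ => φ ⌊t⌋₊ / t) atTop (𝓝 L) := by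
    have := (h.comp tendsto_nat_floor_atTop).mul (tendsto_nat_floor_div_atTop (R := ℝ))
    rw [mul_one] at this
    refine this.congr' ?_
    filter_upwards [eventually_ge_atTop 1] with t ht
    have : (⌊t⌋₊ : ℝ) ≠ 0 := by simpa using ht
    simp [field]
  refine tendsto_div_of_eventually_abs_sub_le (B := K) ?_ hfloor
  filter_upwards [eventually_ge_atTop 0] with t ht
  calc |φ t - φ ⌊t⌋₊| ≤ K * |t - ⌊t⌋₊| := by simpa [Real.dist_eq] using hφ.dist_le_mul t ⌊t⌋₊
    _ ≤ K * 1 := by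
      gcongr
      rw [abs_le]
      constructor <;> linarith [Nat.floor_le ht, Nat.lt_floor_add_one t]
    _ = K := mul_one _

lemma countable_setOf_isRatVec (d : ℕ) : {q : EucSp d | IsRatVec q}.Countable := by
  refine (Set.countable_range fun a : Fin d → ℚ => WithLp.toLp 2 fun i => (a i : ℝ)).mono ?_
  intro q hq
  choose a ha using hq
  exact ⟨a, by ext i; exact (ha i).symm⟩

namespace Theta

variable {d : ℕ} {C : ℝ}

lemma abs_sub_le_mul_dist (θ₁ θ₂ : Theta d C) (z : EucSp d) :
    |θ₁.1 z - θ₂.1 z| ≤ (1 + ‖z‖ ^ 2) * dist θ₁ θ₂ := by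
  rw [← div_le_iff₀' (by positivity)]
  exact le_ciSup (thetaDist_bddAbove θ₁ θ₂) z

lemma dist_le_of_forall {θ₁ θ₂ : Theta d C} {c : ℝ}
    (h : ∀ z, |θ₁.1 z - θ₂.1 z| ≤ (1 + ‖z‖ ^ 2) * c) : dist θ₁ θ₂ ≤ c :=
  ciSup_le fun z => by rw [div_le_iff₀' (by positivity)]; exact h z

lemma continuous_eval (z : EucSp d) : Continuous fun θ : Theta d C => θ.1 z :=
  (LipschitzWith.of_dist_le_mul (K := (1 + ‖z‖ ^ 2).toNNReal) fun θ₁ θ₂ => by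
    rw [Real.dist_eq, Real.coe_toNNReal _ (by positivity)]
    exact abs_sub_le_mul_dist θ₁ θ₂ z).continuous

lemma continuous_shift (x : EucSp d) : Continuous (shift (C := C) x) := by
  refine (LipschitzWith.of_dist_le_mul (K := (3 * (1 + ‖x‖ ^ 2)).toNNReal)
    fun θ₁ θ₂ => ?_).continuous
  rw [Real.coe_toNNReal _ (by positivity)]
  refine dist_le_of_forall fun y => ?_
  have hD := dist_nonneg (x := θ₁) (y := θ₂)
  have hyx : ‖y + x‖ ^ 2 ≤ 2 * ‖y‖ ^ 2 + 2 * ‖x‖ ^ 2 := by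
    nlinarith [norm_add_le y x, norm_nonneg (y + x), sq_nonneg (‖y‖ - ‖x‖)]
  calc |(shift x θ₁).1 y - (shift x θ₂).1 y|
      = |(θ₁.1 (y + x) - θ₂.1 (y + x)) - (θ₁.1 x - θ₂.1 x)| := by simp only [shift]; ring_nf
    _ ≤ (1 + ‖y + x‖ ^ 2) * dist θ₁ θ₂ + (1 + ‖x‖ ^ 2) * dist θ₁ θ₂ :=
        (abs_sub _ _).trans (add_le_add (abs_sub_le_mul_dist _ _ _) (abs_sub_le_mul_dist _ _ _))
    _ ≤ (1 + ‖y‖ ^ 2) * (3 * (1 + ‖x‖ ^ 2) * dist θ₁ θ₂) := by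
        nlinarith [mul_nonneg (mul_nonneg (sq_nonneg ‖y‖) (sq_nonneg ‖x‖)) hD,
          mul_nonneg (sq_nonneg ‖y‖) hD, mul_nonneg (sq_nonneg ‖x‖) hD]

lemma abs_apply_le (θ : Theta d C) (x : EucSp d) : |θ.1 x| ≤ C * ‖x‖ := by
  simpa [θ.2.1] using θ.2.2 x 0

lemma abs_apply_add_sub_sub_le (θ : Theta d C) (x y : EucSp d) :
    |θ.1 (x + y) - θ.1 x - θ.1 y| ≤ 2 * C * ‖x‖ := by
  have h := θ.2.2 (x + y) y
  rw [add_sub_cancel_right] at h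
  calc |θ.1 (x + y) - θ.1 x - θ.1 y| ≤ |θ.1 (x + y) - θ.1 y| + |θ.1 x| := by
        rw [sub_right_comm]; exact abs_sub _ _
    _ ≤ 2 * C * ‖x‖ := by linarith [abs_apply_le θ x]

lemma lipschitzWith_apply_smul (θ : Theta d C) (q : EucSp d) :
    LipschitzWith (C * ‖q‖).toNNReal fun t : ℝ => θ.1 (t • q) :=
  LipschitzWith.of_dist_le' fun s t => by
    simpa [Real.dist_eq, ← sub_smul, norm_smul, mul_comm, mul_left_comm] using
      θ.2.2 (s • q) (t • q)

lemma birkhoffSum_apply_smul {Ω : Type*} (σ : Ω → Ω) (q : EucSp d) (n : ℕ)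
    (p : Ω × Theta d C) :
    birkhoffSum (fun p => (σ p.1, shift q p.2)) (fun p => p.2.1 q) n p = p.2.1 ((n : ℝ) • q) := by
  induction n generalizing p with
  | zero => simp [p.2.2.1]
  | succ n ih =>
    rw [birkhoffSum_succ', ih]
    simp only [shift, Nat.cast_succ, add_smul, one_smul]
    ring

end Theta

theorem ae_exists_tendsto_apply_smul_div {d : ℕ} {C : ℝ} {Ω : Type*} [MeasurableSpace Ω]
    {μ : Measure (Ω × Theta d C)} [IsFiniteMeasure μ] {σ : Ω → Ω} (hσ : Measurable σ)
    (q : EucSp d) (hinv : μ.map (fun p => (σ p.1, Theta.shift q p.2)) = μ) :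
    ∀ᵐ p ∂μ, ∃ L, Tendsto (fun t : ℝ => p.2.1 (t • q) / t) atTop (𝓝 L) := by
  have hT : MeasurePreserving (fun p : Ω × Theta d C => (σ p.1, Theta.shift q p.2)) μ μ :=
    ⟨(hσ.comp measurable_fst).prodMk ((Theta.continuous_shift q).measurable.comp measurable_snd),
      hinv⟩
  filter_upwards [hT.ae_exists_tendsto_birkhoffAverage (f := fun p => p.2.1 q)
    ((Theta.continuous_eval q).measurable.comp measurable_snd)
    fun p => Theta.abs_apply_le p.2 q] with p ⟨L, hL⟩
  refine ⟨L, (Theta.lipschitzWith_apply_smul p.2 q).tendsto_div_of_tendsto_natCast ?_⟩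
  simpa [birkhoffAverage, Theta.birkhoffSum_apply_smul, div_eq_inv_mul] using hL

theorem stmt9_general {d : ℕ} {Ω : Type*}
    [MeasurableSpace Ω]
    (τ : EucSp d → Ω → Ω)
    (hτmeas : Measurable fun p : EucSp d × Ω => τ p.1 p.2)
    (C : ℝ)
    (μ : Measure (Ω × Theta d C)) [IsProbabilityMeasure μ]
    (hinv : ∀ x : EucSp d,
      μ.map (fun p : Ω × Theta d C => (τ x p.1, Theta.shift x p.2)) = μ) :
    (∀ᵐ p ∂μ, ∀ q : EucSp d, IsRatVec q →
      ∃ L : ℝ, Tendsto (fun t : ℝ => (p.2).1 (t • q) / t) atTop (𝓝 L)) ∧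
    (∀ (x q : EucSp d), IsRatVec q →
      ∀ᵐ p ∂μ, ∃ L : ℝ,
        Tendsto (fun t : ℝ => ((p.2).1 (x + t • q) - (p.2).1 x) / t) atTop (𝓝 L) ∧
        Tendsto (fun t : ℝ => (p.2).1 (t • q) / t) atTop (𝓝 L)) := by
  have hdir (q : EucSp d) :=
    ae_exists_tendsto_apply_smul_div (hτmeas.comp measurable_prodMk_left) q (hinv q)
  refine ⟨(ae_ball_iff (countable_setOf_isRatVec d)).2 fun q _ => hdir q, fun x q _ => ?_⟩
  filter_upwards [hdir q] with p ⟨L, hL⟩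
  refine ⟨L, tendsto_div_of_eventually_abs_sub_le (B := 2 * C * ‖x‖)
    (Eventually.of_forall fun t => ?_) hL, hL⟩
  simpa only [sub_right_comm] using Theta.abs_apply_add_sub_sub_le p.2 x (t • q)

/-- For a `τ̃`-invariant measure `μ` on `Ω × Θ_C`: (i) `μ`-a.s. the limit
`ρ(q) = lim_{t→∞} θ(tq)/t` exists for all rational directions `q`; (ii) this limit is
invariant under the shifts `τ̃_x`. -/
theorem stmt9 {d : ℕ} {Ω : Type*} [TopologicalSpace Ω] [PolishSpace Ω]
    [MeasurableSpace Ω] [BorelSpace Ω]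
    (ℙ : Measure Ω) [IsProbabilityMeasure ℙ]
    (τ : EucSp d → Ω → Ω)
    (hτgrp : ∀ x y ω, τ (x + y) ω = τ x (τ y ω))
    (hτzero : ∀ ω, τ 0 ω = ω)
    (hτcont : ∀ x, Continuous (τ x))
    (hτmp : ∀ x, MeasurePreserving (τ x) ℙ ℙ)
    (hτmeas : Measurable fun p : EucSp d × Ω => τ p.1 p.2)
    (C : ℝ) (hC : 0 < C)
    (μ : Measure (Ω × Theta d C)) [IsProbabilityMeasure μ]
    (hinv : ∀ x : EucSp d,
      μ.map (fun p : Ω × Theta d C => (τ x p.1, Theta.shift x p.2)) = μ) :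
    (∀ᵐ p ∂μ, ∀ q : EucSp d, IsRatVec q →
      ∃ L : ℝ, Tendsto (fun t : ℝ => (p.2).1 (t • q) / t) atTop (𝓝 L)) ∧
    (∀ (x q : EucSp d), IsRatVec q →
      ∀ᵐ p ∂μ, ∃ L : ℝ,
        Tendsto (fun t : ℝ => ((p.2).1 (x + t • q) - (p.2).1 x) / t) atTop (𝓝 L) ∧
        Tendsto (fun t : ℝ => (p.2).1 (t • q) / t) atTop (𝓝 L)) :=
  stmt9_general τ hτmeas C μ hinv

end
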